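/- Let p ∈ (1,+∞) and let W₀ : M^{3×2} → [0,+∞] satisfy the stated hypotheses. Then the rank-one convex envelope RW₀ is finite-valued and continuous on M^{3×2}, it satisfies RW₀(F) ≥ C₁|F|^p − C₁⁻¹ for every F (with the same constant C₁ as in the coercivity hypothesis on W₀), and there exists a constant C > 0 such that RW₀(F) ≤ C(1+|F|^p) for every F ∈ M^{3×2}. -/

import Mathlib

open scoped ENNReal
open MeasureTheory

noncomputable section

/-- Frobenius norm of a real matrix. -/
def frob {m n : ℕ} (A : Matrix (Fin m) (Fin n) ℝ) : ℝ :=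
  Real.sqrt (∑ i, ∑ j, (A i j) ^ 2)

/-- Euclidean norm on ℝ³ (viewed as `Fin 3 → ℝ`). -/
def enorm3 (v : Fin 3 → ℝ) : ℝ := Real.sqrt (∑ i, (v i) ^ 2)

/-- Cross product `F¹ ∧ F²` of the two columns of `F ∈ M^{3×2}`. -/
def colCross (F : Matrix (Fin 3) (Fin 2) ℝ) : Fin 3 → ℝ :=
  crossProduct (fun i => F i 0) (fun i => F i 1)

/-- Rank-one convexity of an `[0,+∞]`-valued function on `M^{3×2}`. -/
def RankOneConvex (g : Matrix (Fin 3) (Fin 2) ℝ → ℝ≥0∞) : Prop :=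
  ∀ l : ℝ, l ∈ Set.Ioo (0 : ℝ) 1 → ∀ A B : Matrix (Fin 3) (Fin 2) ℝ, (A - B).rank = 1 →
    g (l • A + (1 - l) • B) ≤ ENNReal.ofReal l * g A + ENNReal.ofReal (1 - l) * g B

/-- Rank-one convex envelope: the pointwise supremum of all rank-one convex functions below `f`. -/
def rcEnv (f : Matrix (Fin 3) (Fin 2) ℝ → ℝ≥0∞) (F : Matrix (Fin 3) (Fin 2) ℝ) : ℝ≥0∞ :=
  ⨆ (g : Matrix (Fin 3) (Fin 2) ℝ → ℝ≥0∞) (_ : RankOneConvex g ∧ ∀ G, g G ≤ f G), g F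

/-- Gradient matrix of a map `φ : ℝ² → ℝ³`. -/
def gradM (φ : EuclideanSpace ℝ (Fin 2) → EuclideanSpace ℝ (Fin 3))
    (x : EuclideanSpace ℝ (Fin 2)) : Matrix (Fin 3) (Fin 2) ℝ :=
  Matrix.of fun i j => fderiv ℝ φ x (EuclideanSpace.single j 1) i

/-- Quasiconvex envelope: `Qf(ξ) = inf { ⨍_{B₁} f(ξ + ∇φ) : φ Lipschitz, φ = 0 outside B₁ }`. -/
def qcEnv (f : Matrix (Fin 3) (Fin 2) ℝ → ℝ≥0∞) (ξ : Matrix (Fin 3) (Fin 2) ℝ) : ℝ≥0∞ :=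
  ⨅ (φ : EuclideanSpace ℝ (Fin 2) → EuclideanSpace ℝ (Fin 3))
    (_ : (∃ K, LipschitzWith K φ) ∧
      ∀ x ∉ Metric.ball (0 : EuclideanSpace ℝ (Fin 2)) 1, φ x = 0),
    (∫⁻ x in Metric.ball (0 : EuclideanSpace ℝ (Fin 2)) 1, f (ξ + gradM φ x)) /
      volume (Metric.ball (0 : EuclideanSpace ℝ (Fin 2)) 1)

/-!
The lower bound holds because `F ↦ C₁|F|^p - C₁⁻¹` is convex, hence rank-one convex, and lies
below `W₀`. For the upper bound, `W₀` has `p`-growth wherever `|F¹ ∧ F²| ≥ 1`, and every `F` is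
the centre of a two-level rank-one laminate supported on such matrices: adding `±m` to the second
column, with `m` a unit vector orthogonal to `F²`, makes `|F²| ≥ 1`; then adding `±n` to the first
column, with `n` a unit vector orthogonal to both columns, gives
`|(F¹ ± n) ∧ F²|² = |F¹ ∧ F²|² + |F²|² ≥ 1`. Each level moves `F` by `1` in norm.
Continuity: a finite rank-one convex function is convex along every matrix entry, and a separately
convex function that is locally bounded is locally Lipschitz, by telescoping over the entries.
-/

open Matrix Set Filter Topology Metric

lemma convexOn_norm_rpow {E : Type*} [NormedAddCommGroup E] [NormedSpace ℝ E] {p : ℝ}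
    (hp : 1 ≤ p) : ConvexOn ℝ univ fun x : E => ‖x‖ ^ p := by
  refine ⟨convex_univ, fun x _ y _ a b ha hb hab => ?_⟩
  calc ‖a • x + b • y‖ ^ p ≤ (a * ‖x‖ + b * ‖y‖) ^ p := by
        gcongr
        refine (norm_add_le _ _).trans_eq ?_
        rw [norm_smul, norm_smul, Real.norm_of_nonneg ha, Real.norm_of_nonneg hb]
    _ ≤ a • ‖x‖ ^ p + b • ‖y‖ ^ p :=
        (convexOn_rpow hp).2 (norm_nonneg x) (norm_nonneg y) ha hb hab

lemma frob_nonneg {m n : ℕ} (A : Matrix (Fin m) (Fin n) ℝ) : 0 ≤ frob A := Real.sqrt_nonneg _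

section Frobenius

attribute [local instance] Matrix.frobeniusNormedAddCommGroup Matrix.frobeniusNormedSpace

lemma frob_eq_norm {m n : ℕ} (A : Matrix (Fin m) (Fin n) ℝ) : frob A = ‖A‖ := by
  simp [frob, frobenius_norm_def, Real.sqrt_eq_rpow, Real.norm_eq_abs, sq_abs]

lemma frob_add_le {m n : ℕ} (A B : Matrix (Fin m) (Fin n) ℝ) : frob (A + B) ≤ frob A + frob B := by
  simpa only [frob_eq_norm] using norm_add_le A B

lemma convexOn_frob_rpow {m n : ℕ} {p : ℝ} (hp : 1 ≤ p) :
    ConvexOn ℝ univ fun A : Matrix (Fin m) (Fin n) ℝ => frob A ^ p := by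
  simpa only [frob_eq_norm] using convexOn_norm_rpow hp

end Frobenius

lemma frob_vecMulVec_single {m n : ℕ} (v : Fin m → ℝ) (j : Fin n) :
    frob (vecMulVec v (Pi.single j 1)) = √(v ⬝ᵥ v) := by
  simp [frob, dotProduct, vecMulVec_apply, Pi.single_apply, sq]

lemma enorm3_eq_sqrt (v : Fin 3 → ℝ) : enorm3 v = √(v ⬝ᵥ v) := by
  simp [enorm3, dotProduct, sq]

@[fun_prop]
lemma continuous_frob {m n : ℕ} : Continuous (frob : Matrix (Fin m) (Fin n) ℝ → ℝ) := by
  unfold frob; fun_prop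

lemma Matrix.rank_vecMulVec_of_ne_zero {K : Type*} [Field K] {m n : Type*}
    [Fintype n] [DecidableEq n] {w : m → K} {v : n → K} (hw : w ≠ 0) (hv : v ≠ 0) :
    (vecMulVec w v).rank = 1 := by
  refine le_antisymm (rank_vecMulVec_le w v) ?_
  obtain ⟨j, hj⟩ := Function.ne_iff.mp hv
  have hmem : w ∈ LinearMap.range (vecMulVec w v).mulVecLin :=
    ⟨Pi.single j (v j)⁻¹, by
      rw [Matrix.mulVecLin_apply, vecMulVec_mulVec, dotProduct_single, mul_inv_cancel₀ hj]; simp⟩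
  calc 1 = Module.finrank K (K ∙ w) := (finrank_span_singleton hw).symm
    _ ≤ (vecMulVec w v).rank :=
        Submodule.finrank_mono ((Submodule.span_singleton_le_iff_mem _ _).mpr hmem)

lemma Matrix.rank_smul_of_ne_zero {K : Type*} [Field K] {m n : Type*} [Fintype n]
    (D : Matrix m n K) {c : K} (hc : c ≠ 0) : (c • D).rank = D.rank :=
  rank_smul_of_mem_nonZeroDivisors D (mem_nonZeroDivisors_of_ne_zero hc)

local notation "M32" => Matrix (Fin 3) (Fin 2) ℝ

namespace RankOneConvex

variable {g : M32 → ℝ≥0∞}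

lemma of_convexOn {φ : M32 → ℝ} (hφ : ConvexOn ℝ univ φ) :
    RankOneConvex fun F => ENNReal.ofReal (φ F) := by
  intro l hl A B _
  calc ENNReal.ofReal (φ (l • A + (1 - l) • B))
      ≤ ENNReal.ofReal (l * φ A + (1 - l) * φ B) :=
        ENNReal.ofReal_le_ofReal (hφ.2 trivial trivial hl.1.le (by linarith [hl.2]) (by ring))
    _ ≤ ENNReal.ofReal (l * φ A) + ENNReal.ofReal ((1 - l) * φ B) := ENNReal.ofReal_add_le
    _ = ENNReal.ofReal l * ENNReal.ofReal (φ A)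
        + ENNReal.ofReal (1 - l) * ENNReal.ofReal (φ B) := by
        rw [ENNReal.ofReal_mul hl.1.le, ENNReal.ofReal_mul (by linarith [hl.2])]

lemma le_max_add_sub (hg : RankOneConvex g) {D : M32} (hD : D.rank = 1) (F : M32) :
    g F ≤ max (g (F + D)) (g (F - D)) := by
  have hrank : ((F + D) - (F - D)).rank = 1 := by
    rw [add_sub_sub_cancel, ← two_smul ℝ, rank_smul_of_ne_zero _ two_ne_zero, hD]
  have hmid : (1 / 2 : ℝ) • (F + D) + (1 - 1 / 2 : ℝ) • (F - D) = F := by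
    rw [show (1 - 1 / 2 : ℝ) = 1 / 2 by norm_num, ← smul_add, add_add_sub_cancel, ← two_smul ℝ,
      smul_smul]
    norm_num
  have h := hg (1 / 2) ⟨by norm_num, by norm_num⟩ _ _ hrank
  rw [hmid, show (1 - 1 / 2 : ℝ) = 1 / 2 by norm_num] at h
  refine h.trans ?_
  calc ENNReal.ofReal (1 / 2) * g (F + D) + ENNReal.ofReal (1 / 2) * g (F - D)
      ≤ ENNReal.ofReal (1 / 2) * max (g (F + D)) (g (F - D))
        + ENNReal.ofReal (1 / 2) * max (g (F + D)) (g (F - D)) := by gcongr <;> simp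
    _ = max (g (F + D)) (g (F - D)) := by
        rw [← add_mul, ← ENNReal.ofReal_add (by norm_num) (by norm_num)]; norm_num

lemma convexOn_toReal_line (hg : RankOneConvex g) (hfin : ∀ F, g F ≠ ⊤) (A : M32) {D : M32}
    (hD : D.rank = 1) : ConvexOn ℝ univ fun t : ℝ => (g (A + t • D)).toReal := by
  refine convexOn_iff_pairwise_pos.mpr ⟨convex_univ, fun x _ y _ hxy a b ha hb hab => ?_⟩
  have hrank : ((A + x • D) - (A + y • D)).rank = 1 := by
    rw [add_sub_add_left_eq_sub, ← sub_smul, rank_smul_of_ne_zero _ (sub_ne_zero.mpr hxy), hD]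
  have hcomb : a • (A + x • D) + (1 - a) • (A + y • D) = A + (a • x + b • y) • D := by
    rw [← hab, add_sub_cancel_left, smul_add, smul_add, add_add_add_comm, ← add_smul, hab,
      one_smul, smul_smul, smul_smul, ← add_smul, smul_eq_mul, smul_eq_mul]
  have h := hg a ⟨ha, by linarith⟩ _ _ hrank
  rw [hcomb, ← hab, add_sub_cancel_left] at h
  have hne : ∀ c F, ENNReal.ofReal c * g F ≠ ⊤ := fun c F =>
    ENNReal.mul_ne_top ENNReal.ofReal_ne_top (hfin F)
  have := ENNReal.toReal_mono (ENNReal.add_ne_top.mpr ⟨hne _ _, hne _ _⟩) h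
  rwa [ENNReal.toReal_add (hne _ _) (hne _ _), ENNReal.toReal_mul,
    ENNReal.toReal_mul, ENNReal.toReal_ofReal ha.le, ENNReal.toReal_ofReal hb.le] at this

end RankOneConvex

lemma le_rcEnv {f g : M32 → ℝ≥0∞} (hg : RankOneConvex g) (hgf : ∀ G, g G ≤ f G) (F : M32) :
    g F ≤ rcEnv f F :=
  le_iSup₂_of_le g ⟨hg, hgf⟩ le_rfl

lemma rcEnv_le {f : M32 → ℝ≥0∞} {F : M32} {K : ℝ≥0∞}
    (h : ∀ g, RankOneConvex g → (∀ G, g G ≤ f G) → g F ≤ K) : rcEnv f F ≤ K :=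
  iSup₂_le fun g hg => h g hg.1 hg.2

lemma rankOneConvex_rcEnv (f : M32 → ℝ≥0∞) : RankOneConvex (rcEnv f) :=
  fun l hl A B hAB => rcEnv_le fun g hg hgf => (hg l hl A B hAB).trans <| by
    gcongr <;> exact le_rcEnv hg hgf _

lemma exists_unit_orthogonal (a v : Fin 3 → ℝ) :
    ∃ n : Fin 3 → ℝ, n ⬝ᵥ n = 1 ∧ n ⬝ᵥ a = 0 ∧ n ⬝ᵥ v = 0 := by
  obtain ⟨w, hw, hker⟩ := (Matrix.exists_mulVec_eq_zero_iff (M := Matrix.of ![a, v, 0])).mpr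
    (Matrix.det_eq_zero_of_row_eq_zero 2 fun _ => rfl)
  have hwa : w ⬝ᵥ a = 0 := by rw [dotProduct_comm]; exact congrFun hker 0
  have hwv : w ⬝ᵥ v = 0 := by rw [dotProduct_comm]; exact congrFun hker 1
  have hpos : 0 < w ⬝ᵥ w := lt_of_le_of_ne (Finset.sum_nonneg fun i _ => mul_self_nonneg (w i))
    (Ne.symm (dotProduct_self_eq_zero.not.mpr hw))
  refine ⟨(√(w ⬝ᵥ w))⁻¹ • w, ?_, ?_, ?_⟩
  · rw [smul_dotProduct, dotProduct_smul, smul_smul, smul_eq_mul, ← sq, inv_pow,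
      Real.sq_sqrt hpos.le, inv_mul_cancel₀ hpos.ne']
  · rw [smul_dotProduct, hwa, smul_zero]
  · rw [smul_dotProduct, hwv, smul_zero]

lemma frob_add_vecMulVec_le (F : M32) {n : Fin 3 → ℝ} (hnn : n ⬝ᵥ n = 1) (j : Fin 2) :
    frob (F + vecMulVec n (Pi.single j 1)) ≤ frob F + 1 :=
  (frob_add_le _ _).trans_eq (by rw [frob_vecMulVec_single, hnn, Real.sqrt_one])

lemma colCross_add_vecMulVec_dot_self (F : M32) {n : Fin 3 → ℝ} (hnn : n ⬝ᵥ n = 1)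
    (hn0 : n ⬝ᵥ (fun i => F i 0) = 0) (hn1 : n ⬝ᵥ (fun i => F i 1) = 0) :
    colCross (F + vecMulVec n (Pi.single 0 1)) ⬝ᵥ colCross (F + vecMulVec n (Pi.single 0 1))
      = colCross F ⬝ᵥ colCross F + (fun i => F i 1) ⬝ᵥ (fun i => F i 1) := by
  set a : Fin 3 → ℝ := fun i => F i 0
  set v : Fin 3 → ℝ := fun i => F i 1
  have hcol : colCross (F + vecMulVec n (Pi.single 0 1)) = a ⨯₃ v + n ⨯₃ v := by
    have h0 : (fun i => (F + vecMulVec n (Pi.single 0 1) : M32) i 0) = a + n := by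
      funext i; simp [a, vecMulVec_apply]
    have h1 : (fun i => (F + vecMulVec n (Pi.single 0 1) : M32) i 1) = v := by
      funext i; simp [v, vecMulVec_apply]
    rw [colCross, h0, h1, LinearMap.map_add₂]
  rw [hcol, colCross, add_dotProduct, dotProduct_add, dotProduct_add, cross_dot_cross,
    cross_dot_cross, cross_dot_cross, cross_dot_cross]
  simp only [dotProduct_comm v n, dotProduct_comm a n, hnn, hn0, hn1]
  ring

section UpperBound

variable {p c : ℝ} {W₀ g : M32 → ℝ≥0∞}

lemma RankOneConvex.le_of_one_le_dotProduct_col (hp : 0 ≤ p) (hc : 0 ≤ c)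
    (hgrowth : ∀ F, 1 ≤ enorm3 (colCross F) → W₀ F ≤ ENNReal.ofReal (c * (1 + frob F ^ p)))
    (hg : RankOneConvex g) (hgW : ∀ G, g G ≤ W₀ G) {F : M32}
    (hv : 1 ≤ (fun i => F i 1) ⬝ᵥ (fun i => F i 1)) :
    g F ≤ ENNReal.ofReal (c * (1 + (frob F + 1) ^ p)) := by
  have arm : ∀ n : Fin 3 → ℝ, n ⬝ᵥ n = 1 → n ⬝ᵥ (fun i => F i 0) = 0 →
      n ⬝ᵥ (fun i => F i 1) = 0 →
      g (F + vecMulVec n (Pi.single 0 1)) ≤ ENNReal.ofReal (c * (1 + (frob F + 1) ^ p)) := by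
    intro n hnn hn0 hn1
    refine (hgW _).trans ((hgrowth _ ?_).trans ?_)
    · rw [enorm3_eq_sqrt, Real.one_le_sqrt, colCross_add_vecMulVec_dot_self F hnn hn0 hn1]
      have : 0 ≤ colCross F ⬝ᵥ colCross F := Finset.sum_nonneg fun i _ => mul_self_nonneg _
      linarith
    · have := frob_add_vecMulVec_le F hnn 0
      gcongr
      exact frob_nonneg _
  obtain ⟨n, hnn, hn0, hn1⟩ := exists_unit_orthogonal (fun i => F i 0) (fun i => F i 1)
  have hn : n ≠ 0 := by rintro rfl; simp at hnn
  refine (hg.le_max_add_sub (rank_vecMulVec_of_ne_zero hn (by simp)) F).trans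
    (max_le (arm n hnn hn0 hn1) ?_)
  rw [sub_eq_add_neg, ← neg_vecMulVec]
  exact arm (-n) (by simpa using hnn) (by simpa using hn0) (by simpa using hn1)

lemma RankOneConvex.le_of_growth (hp : 0 ≤ p) (hc : 0 ≤ c)
    (hgrowth : ∀ F, 1 ≤ enorm3 (colCross F) → W₀ F ≤ ENNReal.ofReal (c * (1 + frob F ^ p)))
    (hg : RankOneConvex g) (hgW : ∀ G, g G ≤ W₀ G) (F : M32) :
    g F ≤ ENNReal.ofReal (c * (1 + (frob F + 2) ^ p)) := by
  set v : Fin 3 → ℝ := fun i => F i 1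
  have arm : ∀ m : Fin 3 → ℝ, m ⬝ᵥ m = 1 → m ⬝ᵥ v = 0 →
      g (F + vecMulVec m (Pi.single 1 1)) ≤ ENNReal.ofReal (c * (1 + (frob F + 2) ^ p)) := by
    intro m hmm hmv
    have hcol : (fun i => (F + vecMulVec m (Pi.single 1 1) : M32) i 1) = v + m := by
      funext i; simp [v, vecMulVec_apply]
    refine (hg.le_of_one_le_dotProduct_col hp hc hgrowth hgW ?_).trans ?_
    · rw [hcol, add_dotProduct, dotProduct_add, dotProduct_add, dotProduct_comm v m, hmv, hmm]
      have : 0 ≤ v ⬝ᵥ v := Finset.sum_nonneg fun i _ => mul_self_nonneg _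
      linarith
    · have := frob_add_vecMulVec_le F hmm 1
      gcongr ENNReal.ofReal (c * (1 + ?_ ^ p))
      · exact add_nonneg (frob_nonneg _) zero_le_one
      · linarith
  obtain ⟨m, hmm, -, hmv⟩ := exists_unit_orthogonal v v
  have hm : m ≠ 0 := by rintro rfl; simp at hmm
  refine (hg.le_max_add_sub (rank_vecMulVec_of_ne_zero hm (by simp)) F).trans
    (max_le (arm m hmm hmv) ?_)
  rw [sub_eq_add_neg, ← neg_vecMulVec]
  exact arm (-m) (by simpa using hmm) (by simpa using hmv)

end UpperBound

lemma add_rpow_le_two_mul_rpow_add {p t s : ℝ} (hp : 0 ≤ p) (ht : 0 ≤ t) (hs : 0 ≤ s) :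
    (t + s) ^ p ≤ (2 * t) ^ p + (2 * s) ^ p := by
  rcases le_total t s with h | h
  · calc (t + s) ^ p ≤ (2 * s) ^ p := by gcongr; linarith
      _ ≤ _ := le_add_of_nonneg_left (by positivity)
  · calc (t + s) ^ p ≤ (2 * t) ^ p := by gcongr; linarith
      _ ≤ _ := le_add_of_nonneg_right (by positivity)

lemma rcEnv_le_of_growth {p c : ℝ} {W₀ : M32 → ℝ≥0∞} (hp : 0 ≤ p) (hc : 0 ≤ c)
    (hgrowth : ∀ F, 1 ≤ enorm3 (colCross F) → W₀ F ≤ ENNReal.ofReal (c * (1 + frob F ^ p)))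
    (F : M32) : rcEnv W₀ F ≤ ENNReal.ofReal (c * (1 + 2 ^ p + 4 ^ p) * (1 + frob F ^ p)) := by
  refine rcEnv_le fun g hg hgW => (hg.le_of_growth hp hc hgrowth hgW F).trans ?_
  have hsplit := add_rpow_le_two_mul_rpow_add hp (frob_nonneg F) zero_le_two
  rw [Real.mul_rpow zero_le_two (frob_nonneg F), show (2 * 2 : ℝ) = 4 by norm_num] at hsplit
  have : 0 ≤ frob F ^ p := Real.rpow_nonneg (frob_nonneg F) p
  have : (1 : ℝ) ≤ 2 ^ p := Real.one_le_rpow one_le_two hp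
  have : 0 ≤ (4 : ℝ) ^ p := by positivity
  refine ENNReal.ofReal_le_ofReal ?_
  rw [mul_assoc]
  gcongr c * ?_
  nlinarith

section SeparatelyConvex

variable {ι : Type*} [Fintype ι] [DecidableEq ι] {u : (ι → ℝ) → ℝ}

lemma abs_sub_update_le_of_convexOn_update
    (hconv : ∀ x i, ConvexOn ℝ univ fun t => u (Function.update x i t))
    {x₀ : ι → ℝ} {r M : ℝ} (hM : ∀ y ∈ ball x₀ r, |u y| ≤ M) {z : ι → ℝ}
    (hz : z ∈ ball x₀ (r / 2)) (i : ι) {s t : ℝ} (hs : s ∈ ball (x₀ i) (r / 2))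
    (ht : t ∈ ball (x₀ i) (r / 2)) :
    |u (Function.update z i s) - u (Function.update z i t)| ≤ 4 * M / r * |s - t| := by
  have hr : 0 < r := by linarith [(nonempty_ball.mp ⟨s, hs⟩)]
  have hline : ∀ τ, dist τ (x₀ i) < r → |u (Function.update z i τ)| ≤ M := by
    intro τ hτ
    refine hM _ ((dist_pi_lt_iff hr).mpr fun k => ?_)
    rcases eq_or_ne k i with rfl | hk
    · simpa using hτ
    · rw [Function.update_of_ne hk]
      exact ((dist_le_pi_dist z x₀ k).trans_lt hz).trans (by linarith)
  have hM0 : 0 ≤ M := (abs_nonneg _).trans (hline (x₀ i) (by simpa using hr))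
  have hlip := ((hconv z i).subset (subset_univ _) (convex_ball (x₀ i) r)).lipschitzOnWith_of_abs_le
    (half_pos hr) hline
  rw [show r - r / 2 = r / 2 by ring] at hlip
  have := hlip.dist_le_mul s hs t ht
  rwa [Real.coe_toNNReal _ (by positivity), Real.dist_eq, Real.dist_eq,
    show 2 * M / (r / 2) = 4 * M / r by field_simp; ring] at this

lemma abs_sub_le_of_convexOn_update
    (hconv : ∀ x i, ConvexOn ℝ univ fun t => u (Function.update x i t))
    {x₀ : ι → ℝ} {r M : ℝ} (hM : ∀ y ∈ ball x₀ r, |u y| ≤ M) {y : ι → ℝ}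
    (hy : y ∈ ball x₀ (r / 2)) :
    |u y - u x₀| ≤ 4 * M / r * ∑ i, |y i - x₀ i| := by
  have hr : 0 < r / 2 := pos_of_mem_ball hy
  have hmem : ∀ S : Finset ι, S.piecewise y x₀ ∈ ball x₀ (r / 2) := fun S =>
    (dist_pi_lt_iff hr).mpr fun k => by
      by_cases hk : k ∈ S
      · rw [Finset.piecewise_eq_of_mem _ _ _ hk]
        exact (dist_le_pi_dist y x₀ k).trans_lt hy
      · simpa [Finset.piecewise_eq_of_notMem _ _ _ hk] using hr
  suffices h : ∀ S : Finset ι,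
      |u (S.piecewise y x₀) - u x₀| ≤ 4 * M / r * ∑ i ∈ S, |y i - x₀ i| by
    simpa using h Finset.univ
  intro S
  induction S using Finset.induction_on with
  | empty => simp
  | insert a S ha ih =>
    have hstep : |u ((insert a S).piecewise y x₀) - u (S.piecewise y x₀)|
        ≤ 4 * M / r * |y a - x₀ a| := by
      have hS : S.piecewise y x₀ = Function.update (S.piecewise y x₀) a (x₀ a) := by
        rw [eq_comm, Function.update_eq_self_iff, Finset.piecewise_eq_of_notMem _ _ _ ha]
      rw [Finset.piecewise_insert, hS, Function.update_idem]
      refine abs_sub_update_le_of_convexOn_update hconv hM (hmem S) a ?_ (mem_ball_self hr)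
      exact (dist_le_pi_dist y x₀ a).trans_lt hy
    calc |u ((insert a S).piecewise y x₀) - u x₀|
        ≤ |u ((insert a S).piecewise y x₀) - u (S.piecewise y x₀)|
          + |u (S.piecewise y x₀) - u x₀| := abs_sub_le _ _ _
      _ ≤ 4 * M / r * |y a - x₀ a| + 4 * M / r * ∑ i ∈ S, |y i - x₀ i| := add_le_add hstep ih
      _ = 4 * M / r * ∑ i ∈ insert a S, |y i - x₀ i| := by rw [Finset.sum_insert ha]; ring

theorem continuous_of_convexOn_update
    (hconv : ∀ x i, ConvexOn ℝ univ fun t => u (Function.update x i t))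
    (hloc : ∀ x₀, ∃ M, ∀ᶠ y in 𝓝 x₀, |u y| ≤ M) : Continuous u := by
  refine continuous_iff_continuousAt.mpr fun x₀ => ?_
  obtain ⟨M, hM⟩ := hloc x₀
  obtain ⟨r, hr, hball⟩ := Metric.eventually_nhds_iff_ball.mp hM
  have hbound : Tendsto (fun y => 4 * M / r * ∑ i, |y i - x₀ i|) (𝓝 x₀) (𝓝 0) := by
    have : Continuous fun y : ι → ℝ => 4 * M / r * ∑ i, |y i - x₀ i| := by fun_prop
    simpa using this.tendsto x₀
  rw [ContinuousAt, tendsto_iff_dist_tendsto_zero]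
  refine squeeze_zero' (.of_forall fun _ => dist_nonneg) ?_ hbound
  filter_upwards [ball_mem_nhds x₀ (half_pos hr)] with y hy
  exact (Real.dist_eq _ _).trans_le (abs_sub_le_of_convexOn_update hconv hball hy)

end SeparatelyConvex

lemma RankOneConvex.continuous_of_le_ofReal {g : M32 → ℝ≥0∞} (hg : RankOneConvex g)
    {h : M32 → ℝ} (hh : Continuous h) (hgh : ∀ F, g F ≤ ENNReal.ofReal (h F)) :
    Continuous g := by
  have hfin : ∀ F, g F ≠ ⊤ := fun F => ne_top_of_le_ne_top ENNReal.ofReal_ne_top (hgh F)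
  let e : (Fin 3 × Fin 2 → ℝ) → M32 := fun x => Matrix.of fun i j => x (i, j)
  have he : Continuous e := continuous_pi fun i => continuous_pi fun j => continuous_apply (i, j)
  have hupdate : ∀ x q t, e (Function.update x q t)
      = (e x - x q • single q.1 q.2 1) + t • single q.1 q.2 1 := by
    intro x q t
    ext i j
    by_cases hq : (i, j) = q
    · subst hq; simp [e]
    · have : ¬(q.1 = i ∧ q.2 = j) := fun h => hq (Prod.ext h.1.symm h.2.symm)
      simp [e, Function.update_of_ne hq, this]
  have hrank : ∀ q : Fin 3 × Fin 2, (single q.1 q.2 (1 : ℝ)).rank = 1 := fun q => by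
    rw [single_eq_single_vecMulVec_single]
    exact rank_vecMulVec_of_ne_zero (by simp) (by simp)
  have hu : Continuous fun x => (g (e x)).toReal := by
    refine continuous_of_convexOn_update (fun x q => ?_) (fun x₀ => ⟨max (h (e x₀) + 1) 0, ?_⟩)
    · simp only [hupdate]
      exact hg.convexOn_toReal_line hfin _ (hrank q)
    · filter_upwards [(hh.comp he).continuousAt.eventually_lt continuousAt_const
        (lt_add_one (h (e x₀)))] with y hy
      rw [abs_of_nonneg ENNReal.toReal_nonneg]
      calc (g (e y)).toReal ≤ (ENNReal.ofReal (h (e y))).toReal :=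
            ENNReal.toReal_mono ENNReal.ofReal_ne_top (hgh _)
        _ = max (h (e y)) 0 := ENNReal.toReal_ofReal'
        _ ≤ max (h (e x₀) + 1) 0 := max_le_max_right 0 hy.le
  have hg_eq : g = fun F => ENNReal.ofReal ((g (e fun q => F q.1 q.2)).toReal) :=
    funext fun F => (ENNReal.ofReal_toReal (hfin F)).symm
  rw [hg_eq]
  exact ENNReal.continuous_ofReal.comp
    (hu.comp (f := fun (F : M32) (q : Fin 3 × Fin 2) => F q.1 q.2) (by fun_prop))

lemma rankOneConvex_coercive {p C : ℝ} (hp : 1 ≤ p) (hC : 0 ≤ C) :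
    RankOneConvex fun F => ENNReal.ofReal (C * frob F ^ p - C⁻¹) := by
  simpa only [sub_eq_add_neg, smul_eq_mul, Pi.add_apply] using
    RankOneConvex.of_convexOn (((convexOn_frob_rpow hp).smul hC).add_const (-C⁻¹))

theorem stmt3_general (p : ℝ) (hp : 1 < p) (W₀ : Matrix (Fin 3) (Fin 2) ℝ → ℝ≥0∞)
    (C₁ : ℝ) (hC₁ : 0 < C₁)
    (hcoer : ∀ F, ENNReal.ofReal (C₁ * frob F ^ p - C₁⁻¹) ≤ W₀ F)
    (hgrowth : ∀ δ : ℝ, 0 < δ → ∃ c : ℝ, 0 < c ∧ ∀ F,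
      δ ≤ enorm3 (colCross F) → W₀ F ≤ ENNReal.ofReal (c * (1 + frob F ^ p))) :
    (∀ F, rcEnv W₀ F ≠ ⊤) ∧
    Continuous (rcEnv W₀) ∧
    (∀ F, ENNReal.ofReal (C₁ * frob F ^ p - C₁⁻¹) ≤ rcEnv W₀ F) ∧
    (∃ C : ℝ, 0 < C ∧ ∀ F, rcEnv W₀ F ≤ ENNReal.ofReal (C * (1 + frob F ^ p))) := by
  obtain ⟨c, hc, hc_growth⟩ := hgrowth 1 one_pos
  set C := c * (1 + 2 ^ p + 4 ^ p)
  have hC : 0 < C := by positivity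
  have hub : ∀ F, rcEnv W₀ F ≤ ENNReal.ofReal (C * (1 + frob F ^ p)) :=
    rcEnv_le_of_growth (by linarith) hc.le hc_growth
  refine ⟨fun F => ne_top_of_le_ne_top ENNReal.ofReal_ne_top (hub F), ?_,
    le_rcEnv (rankOneConvex_coercive hp.le hC₁.le) hcoer, C, hC, hub⟩
  exact (rankOneConvex_rcEnv W₀).continuous_of_le_ofReal
    (by fun_prop (disch := linarith)) hub

/-- the rank-one convex envelope of `W₀` is finite-valued, continuous,
`p`-coercive with the same constant `C₁`, and has `p`-growth from above. -/
theorem stmt3 (p : ℝ) (hp : 1 < p) (W₀ : Matrix (Fin 3) (Fin 2) ℝ → ℝ≥0∞)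
    (C₁ : ℝ) (hC₁ : 0 < C₁)
    (hcont : Continuous W₀)
    (hcoer : ∀ F, ENNReal.ofReal (C₁ * frob F ^ p - C₁⁻¹) ≤ W₀ F)
    (htop : ∀ F, W₀ F = ⊤ ↔ colCross F = 0)
    (hgrowth : ∀ δ : ℝ, 0 < δ → ∃ c : ℝ, 0 < c ∧ ∀ F,
      δ ≤ enorm3 (colCross F) → W₀ F ≤ ENNReal.ofReal (c * (1 + frob F ^ p))) :
    (∀ F, rcEnv W₀ F ≠ ⊤) ∧
    Continuous (rcEnv W₀) ∧
    (∀ F, ENNReal.ofReal (C₁ * frob F ^ p - C₁⁻¹) ≤ rcEnv W₀ F) ∧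
    (∃ C : ℝ, 0 < C ∧ ∀ F, rcEnv W₀ F ≤ ENNReal.ofReal (C * (1 + frob F ^ p))) :=
  stmt3_general p hp W₀ C₁ hC₁ hcoer hgrowth
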